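/- For every k ∈ ℤ, H_2(k) = H_2(k+1), where H_2(k) := Q_{1,k}⁴/(Q_{2,2k}²Q_{2,2k+1}²) + 2·Q_{1,k}³/(Q_{1,k+1}Q_{2,2k}²) + Q_{1,k}²Q_{2,2k+1}²/(Q_{1,k+1}²Q_{2,2k}²) + 2·Q_{1,k}²/Q_{2,2k+1}² + Q_{1,k}²Q_{1,k+1}²/(Q_{2,2k}²Q_{2,2k+1}²) + 2·Q_{1,k}/(Q_{1,k+1}Q_{2,2k}) + 2·Q_{1,k}Q_{1,k+1}/Q_{2,2k}² + Q_{2,2k+1}²/(Q_{1,k}²Q_{1,k+1}²) + 2·Q_{2,2k+1}²/(Q_{1,k+1}²Q_{2,2k}) + Q_{2,2k+1}²/Q_{2,2k}² + 2·Q_{2,2k}/Q_{1,k}² + 2·Q_{1,k+1}²/Q_{2,2k+1}² + Q_{2,2k}²/Q_{2,2k+1}² + Q_{1,k+1}²Q_{2,2k}²/(Q_{1,k}²Q_{2,2k+1}²) + 2. That is, H_2 is a conserved quantity of the B_2 Q-system. -/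

import Mathlib

/-!
The Q-system relations determine `Q_{2,2k+2}`, `Q_{1,k+2}`, `Q_{2,2k+3}` and also `Q_{2,2k}` as
rational functions of `a = Q_{1,k}`, `b = Q_{1,k+1}`, `d = Q_{2,2k+1}`, `e = Q_{2,2k+2}`.
In these coordinates no relation remains, so `H_2(k) = H_2(k+1)` is an identity of rational
functions in four independent variables.
-/

/-- The Hamiltonian `H_2(k)` of the `B_2` Q-system: the partition function of
pairs of hard particles, written out explicitly. -/
noncomputable def HamB2two (Q1 Q2 : ℤ → ℂ) (k : ℤ) : ℂ :=
  Q1 k ^ 4 / (Q2 (2 * k) ^ 2 * Q2 (2 * k + 1) ^ 2)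
    + 2 * Q1 k ^ 3 / (Q1 (k + 1) * Q2 (2 * k) ^ 2)
    + Q1 k ^ 2 * Q2 (2 * k + 1) ^ 2 / (Q1 (k + 1) ^ 2 * Q2 (2 * k) ^ 2)
    + 2 * Q1 k ^ 2 / Q2 (2 * k + 1) ^ 2
    + Q1 k ^ 2 * Q1 (k + 1) ^ 2 / (Q2 (2 * k) ^ 2 * Q2 (2 * k + 1) ^ 2)
    + 2 * Q1 k / (Q1 (k + 1) * Q2 (2 * k))
    + 2 * (Q1 k * Q1 (k + 1)) / Q2 (2 * k) ^ 2
    + Q2 (2 * k + 1) ^ 2 / (Q1 k ^ 2 * Q1 (k + 1) ^ 2)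
    + 2 * Q2 (2 * k + 1) ^ 2 / (Q1 (k + 1) ^ 2 * Q2 (2 * k))
    + Q2 (2 * k + 1) ^ 2 / Q2 (2 * k) ^ 2
    + 2 * Q2 (2 * k) / Q1 k ^ 2
    + 2 * Q1 (k + 1) ^ 2 / Q2 (2 * k + 1) ^ 2
    + Q2 (2 * k) ^ 2 / Q2 (2 * k + 1) ^ 2
    + Q1 (k + 1) ^ 2 * Q2 (2 * k) ^ 2 / (Q1 k ^ 2 * Q2 (2 * k + 1) ^ 2)
    + 2

def hamiltonianB2 {K : Type*} [Field K] (a b c d : K) : K :=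
  a ^ 4 / (c ^ 2 * d ^ 2) + 2 * a ^ 3 / (b * c ^ 2) + a ^ 2 * d ^ 2 / (b ^ 2 * c ^ 2)
    + 2 * a ^ 2 / d ^ 2 + a ^ 2 * b ^ 2 / (c ^ 2 * d ^ 2) + 2 * a / (b * c)
    + 2 * (a * b) / c ^ 2 + d ^ 2 / (a ^ 2 * b ^ 2) + 2 * d ^ 2 / (b ^ 2 * c)
    + d ^ 2 / c ^ 2 + 2 * c / a ^ 2 + 2 * b ^ 2 / d ^ 2 + c ^ 2 / d ^ 2
    + b ^ 2 * c ^ 2 / (a ^ 2 * d ^ 2) + 2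

theorem HamB2two_eq_hamiltonianB2 (Q1 Q2 : ℤ → ℂ) (k : ℤ) :
    HamB2two Q1 Q2 k = hamiltonianB2 (Q1 k) (Q1 (k + 1)) (Q2 (2 * k)) (Q2 (2 * k + 1)) :=
  rfl

theorem hamiltonianB2_eq_of_qSystem_step {K : Type*} [Field K] {a b c d e f g : K}
    (ha : a ≠ 0) (hb : b ≠ 0) (hc : c ≠ 0) (hd : d ≠ 0) (he : e ≠ 0) (hf : f ≠ 0) (hg : g ≠ 0)
    (hce : c * e = d ^ 2 + a * b) (haf : a * f = b ^ 2 + e) (hdg : d * g = e ^ 2 + b ^ 2) :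
    hamiltonianB2 a b c d = hamiltonianB2 b f e g := by
  obtain rfl : c = (d ^ 2 + a * b) / e := by rw [eq_div_iff he]; linear_combination hce
  obtain rfl : f = (b ^ 2 + e) / a := by rw [eq_div_iff ha]; linear_combination haf
  obtain rfl : g = (e ^ 2 + b ^ 2) / d := by rw [eq_div_iff hd]; linear_combination hdg
  have hc' : d ^ 2 + a * b ≠ 0 := fun h ↦ hc (by rw [h, zero_div])
  have hf' : b ^ 2 + e ≠ 0 := fun h ↦ hf (by rw [h, zero_div])
  have hg' : e ^ 2 + b ^ 2 ≠ 0 := fun h ↦ hg (by rw [h, zero_div])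
  unfold hamiltonianB2
  field_simp
  ring

/-- `H_2` is a conserved quantity of the `B_2` Q-system. -/
theorem HamB2two_conserved
    (Q1 Q2 : ℤ → ℂ)
    (h1ne : ∀ k : ℤ, Q1 k ≠ 0) (h2ne : ∀ k : ℤ, Q2 k ≠ 0)
    (hrec1 : ∀ k : ℤ, Q1 (k + 1) * Q1 (k - 1) = Q1 k ^ 2 + Q2 (2 * k))
    (hrec2 : ∀ k : ℤ, Q2 (k + 1) * Q2 (k - 1) =
      Q2 k ^ 2 + Q1 (Int.fdiv k 2) * Q1 (Int.fdiv (k + 1) 2)) :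
    ∀ k : ℤ, HamB2two Q1 Q2 k = HamB2two Q1 Q2 (k + 1) := by
  intro k
  have hrec2' : ∀ n : ℤ, Q2 (n + 1) * Q2 (n - 1) = Q2 n ^ 2 + Q1 (n / 2) * Q1 ((n + 1) / 2) := by
    simpa only [Int.fdiv_eq_ediv_of_nonneg _ zero_le_two] using hrec2
  have hce : Q2 (2 * k) * Q2 (2 * k + 2) = Q2 (2 * k + 1) ^ 2 + Q1 k * Q1 (k + 1) := by
    have h := hrec2' (2 * k + 1)
    rw [show (2 * k + 1) / 2 = k by omega, show (2 * k + 1 + 1) / 2 = k + 1 by omega] at h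
    ring_nf at h ⊢
    linear_combination h
  have haf : Q1 k * Q1 (k + 2) = Q1 (k + 1) ^ 2 + Q2 (2 * k + 2) := by
    have h := hrec1 (k + 1)
    ring_nf at h ⊢
    linear_combination h
  have hdg : Q2 (2 * k + 1) * Q2 (2 * k + 3) = Q2 (2 * k + 2) ^ 2 + Q1 (k + 1) ^ 2 := by
    have h := hrec2' (2 * k + 2)
    rw [show (2 * k + 2) / 2 = k + 1 by omega, show (2 * k + 2 + 1) / 2 = k + 1 by omega] at h
    ring_nf at h ⊢
    linear_combination h
  rw [HamB2two_eq_hamiltonianB2, HamB2two_eq_hamiltonianB2, show k + 1 + 1 = k + 2 by ring,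
    show 2 * (k + 1) = 2 * k + 2 by ring, show 2 * k + 2 + 1 = 2 * k + 3 by ring]
  exact hamiltonianB2_eq_of_qSystem_step (h1ne _) (h1ne _) (h2ne _) (h2ne _) (h2ne _) (h1ne _)
    (h2ne _) hce haf hdg
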